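/- Let S be a nontrivial subgroup of ℚ, let u, v ∈ ℕ, and let A be a u × v rational matrix that is weakly image partition regular over S and has linearly dependent rows. Then there exist j < u and a (j+u) × 3u rational matrix D that is kernel partition regular over S such that whenever s ∈ (S \ {0})^{3u} and D s = 0, there exists y ∈ S^v \ {0} such that every entry of A y is an entry of s. -/

import Mathlib

/-
Let `C` be a matrix whose kernel is the column space of `A`, and `N > 0` a common
denominator of a right inverse `B` of `A` on that column space. Take for `D` the system `C z = 0`,
`z = N (x' - x)` in the unknowns `(x, x', z)`. For a solution with entries in `S`,
`y = (N B)(x' - x)` has entries in `S` and `A y = z`. Conversely, colour `q ∈ ℚ` by the colours of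
`q, 2q, …, Rq`: weak image partition regularity gives `X = A x` whose multiples `n X`, `n ≤ R`, have
colours independent of the entry, and a monochromatic configuration `α, α + δ, N δ` (van der Waerden
plus compactness, by induction on the number of colours) turns into the monochromatic solution
`(α X, (α + δ) X, N δ X)` of `D`.
-/

open scoped BigOperators

noncomputable def mulVecQ {u v : Type} (A : u → v → ℚ) (x : v → ℚ) : u → ℚ :=
  fun i => ∑ᶠ j, A i j * x j

def KPRQ {u v : Type} (M : u → v → ℚ) (T : Set ℚ) : Prop :=
  ∀ (k : ℕ) (φ : ℚ → Fin k), ∃ x : v → ℚ,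
    (∀ j, x j ∈ T \ {0}) ∧ (∀ i, mulVecQ M x i = 0) ∧
    (∀ j j', φ (x j) = φ (x j'))

def WIPRQ {u v : Type} (A : u → v → ℚ) (S : Set ℚ) : Prop :=
  ∀ (k : ℕ) (φ : ℚ → Fin k), ∃ x : v → ℚ,
    (∀ j, x j ∈ S) ∧ (∀ i, mulVecQ A x i ∈ S \ {0}) ∧
    (∀ i i', φ (mulVecQ A x i) = φ (mulVecQ A x i'))

open Finset Filter Matrix Module

theorem exists_bound_of_forall_exists_mono {κ : Type*} [Finite κ] (𝓕 : Set (Finset ℕ))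
    (h : ∀ χ : ℕ → κ, ∃ F ∈ 𝓕, ∃ c, ∀ n ∈ F, χ n = c) :
    ∃ R, ∀ χ : ℕ → κ, ∃ F ∈ 𝓕, F ⊆ range R ∧ ∃ c, ∀ n ∈ F, χ n = c := by
  by_contra! hbad
  choose χs hχs using hbad
  -- the colourings `χs R` converge along a free ultrafilter to a colouring `χ`
  let U := hyperfilter ℕ
  choose χ hχ using fun n => (U.eventually_exists_iff (P := fun c R => χs R n = c)).1
    (Eventually.of_forall fun R => ⟨_, rfl⟩)
  obtain ⟨F, hF, c, hc⟩ := h χ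
  obtain ⟨R₀, hR₀⟩ := F.exists_nat_subset_range
  have hlarge : ∀ᶠ R in (U : Filter ℕ), R₀ ≤ R :=
    hyperfilter_le_cofinite (Nat.cofinite_eq_atTop ▸ eventually_ge_atTop R₀)
  obtain ⟨R, hRF, hR⟩ := (((eventually_all_finset F).2 fun n _ => hχ n).and hlarge).exists
  obtain ⟨n, hn, hne⟩ := hχs R F hF (hR₀.trans (range_subset_range.2 hR)) c
  exact hne ((hRF n hn).trans (hc n hn))

def progressionTriples (N : ℕ) : Set (Finset ℕ) :=
  {F | ∃ α δ, 0 < α ∧ 0 < δ ∧ F = {α, α + δ, N * δ}}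

section progressionTriples

variable {N : ℕ}

theorem pos_of_mem_progressionTriples (hN : 0 < N) {F : Finset ℕ} (hF : F ∈ progressionTriples N)
    {n : ℕ} (hn : n ∈ F) : 0 < n := by
  obtain ⟨α, δ, hα, hδ, rfl⟩ := hF
  simp only [mem_insert, mem_singleton] at hn
  rcases hn with rfl | rfl | rfl <;> positivity

theorem image_mul_mem_progressionTriples {F : Finset ℕ} (hF : F ∈ progressionTriples N) {a : ℕ}
    (ha : 0 < a) : F.image (a * ·) ∈ progressionTriples N := by
  obtain ⟨α, δ, hα, hδ, rfl⟩ := hF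
  refine ⟨a * α, a * δ, by positivity, by positivity, ?_⟩
  simp only [image_insert, image_singleton, mul_add, mul_left_comm a N]

theorem exists_bound_mono_progressionTriple (hN : 0 < N) (K : ℕ) :
    ∃ R, ∀ χ : ℕ → Fin K, ∃ F ∈ progressionTriples N, F ⊆ range R ∧ ∃ c, ∀ n ∈ F, χ n = c := by
  induction K with
  | zero => exact ⟨0, fun χ => (χ 0).elim0⟩
  | succ K ih =>
    apply exists_bound_of_forall_exists_mono
    intro χ
    rcases K with _ | K
    · exact ⟨{1, 1 + 1, N * 1}, ⟨1, 1, one_pos, one_pos, rfl⟩, χ 0,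
        fun _ _ => Subsingleton.elim (α := Fin 1) _ _⟩
    obtain ⟨R₀, hR₀⟩ := ih
    -- van der Waerden: a monochromatic progression `ℓ n + b`, `n ≤ R₀`, of colour `c₀`
    obtain ⟨ℓ, hℓ, b, c₀, hmono⟩ := Combinatorics.exists_mono_homothetic_copy (range (R₀ + 1)) χ
    have hcopy : ∀ n ≤ R₀, χ (ℓ * n + b) = c₀ := fun n hn =>
      hmono n (mem_range.2 (Nat.lt_succ_of_le hn))
    by_cases hc₀ : ∃ j, 0 < j ∧ j < R₀ ∧ χ (N * (ℓ * j)) = c₀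
    · obtain ⟨j, hj, hjR, hjc⟩ := hc₀
      refine ⟨{ℓ + b, ℓ + b + ℓ * j, N * (ℓ * j)}, ⟨ℓ + b, ℓ * j, by omega, by positivity, rfl⟩,
        c₀, ?_⟩
      simp only [mem_insert, mem_singleton, forall_eq_or_imp, forall_eq]
      refine ⟨by simpa using hcopy 1 (by omega), ?_, hjc⟩
      simpa [mul_add, add_right_comm] using hcopy (1 + j) (by omega)
    · push Not at hc₀
      -- otherwise the dilates `N ℓ n`, `0 < n < R₀`, avoid `c₀`: recolour them with `K + 1` colours
      let χ' : ℕ → Fin (K + 1) := fun n => Function.invFun c₀.succAbove (χ (N * (ℓ * n)))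
      have hχ' : ∀ n, 0 < n → n < R₀ → c₀.succAbove (χ' n) = χ (N * (ℓ * n)) := fun n hn hnR =>
        Function.invFun_eq (Fin.exists_succAbove_eq (hc₀ n hn hnR))
      obtain ⟨F, hF, hFR, c, hc⟩ := hR₀ χ'
      refine ⟨F.image ((N * ℓ) * ·), image_mul_mem_progressionTriples hF (by positivity),
        c₀.succAbove c, ?_⟩
      simp only [forall_mem_image]
      intro n hn
      rw [mul_assoc, ← hχ' n (pos_of_mem_progressionTriples hN hF hn) (mem_range.1 (hFR hn)),
        hc n hn]

end progressionTriples

theorem Submodule.exists_matrix_mulVec_eq_zero_iff {K ι : Type*} [Field K] [Fintype ι]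
    (W : Submodule K (ι → K)) :
    ∃ m, m + finrank K W = Fintype.card ι ∧ ∃ C : Matrix (Fin m) ι K, ∀ z, C *ᵥ z = 0 ↔ z ∈ W := by
  classical
  let b := Module.finBasis K ((ι → K) ⧸ W)
  refine ⟨_, by simpa using W.finrank_quotient_add_finrank,
    LinearMap.toMatrix' (b.equivFun.toLinearMap ∘ₗ W.mkQ), fun z => ?_⟩
  simp [LinearMap.toMatrix'_mulVec, Submodule.Quotient.mk_eq_zero]

theorem Matrix.exists_mulVec_rightInverse_on_range {K ι κ : Type*} [Field K] [Fintype ι]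
    [Fintype κ] (A : Matrix ι κ K) :
    ∃ B : Matrix κ ι K, ∀ z ∈ LinearMap.range A.mulVecLin, A *ᵥ (B *ᵥ z) = z := by
  classical
  obtain ⟨g₀, hg₀⟩ := A.mulVecLin.rangeRestrict.exists_rightInverse_of_surjective
    (LinearMap.range_rangeRestrict _)
  obtain ⟨g, hg⟩ := LinearMap.exists_extend g₀
  refine ⟨LinearMap.toMatrix' g, fun z hz => ?_⟩
  have hgz : g z = g₀ ⟨z, hz⟩ := by rw [← hg]; rfl
  simpa [LinearMap.toMatrix'_mulVec, hgz] using
    congrArg Subtype.val (LinearMap.congr_fun hg₀ ⟨z, hz⟩)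

theorem Rat.exists_nat_mul_eq_intCast {ι : Type*} [Fintype ι] (q : ι → ℚ) :
    ∃ N : ℕ, 0 < N ∧ ∃ z : ι → ℤ, ∀ i, (N : ℚ) * q i = z i := by
  refine ⟨∏ i, (q i).den, Finset.prod_pos fun i _ => (q i).den_pos, ?_⟩
  choose t ht using fun i => Finset.dvd_prod_of_mem (fun j => (q j).den) (Finset.mem_univ i)
  refine ⟨fun i => t i * (q i).num, fun i => ?_⟩
  rw [ht i]
  push_cast
  rw [← Rat.mul_den_eq_num]
  ring

theorem Matrix.exists_int_mulVec_rightInverse_on_range {ι κ : Type*} [Fintype ι] [Fintype κ]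
    (A : Matrix ι κ ℚ) :
    ∃ N : ℕ, 0 < N ∧ ∃ B : Matrix κ ι ℤ,
      ∀ z ∈ LinearMap.range A.mulVecLin, A *ᵥ (B.map (↑) *ᵥ z) = (N : ℚ) • z := by
  obtain ⟨B, hB⟩ := A.exists_mulVec_rightInverse_on_range
  obtain ⟨N, hN, Z, hZ⟩ := Rat.exists_nat_mul_eq_intCast fun p : κ × ι => B p.1 p.2
  have hBZ : (Matrix.of fun l i => Z (l, i)).map ((↑) : ℤ → ℚ) = (N : ℚ) • B := by
    ext l i
    simp [← hZ]
  refine ⟨N, hN, Matrix.of fun l i => Z (l, i), fun z hz => ?_⟩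
  rw [hBZ, smul_mulVec, mulVec_smul, hB z hz]

theorem AddSubgroup.intCast_mulVec_mem {R ι κ : Type*} [Ring R] [Fintype κ] (S : AddSubgroup R)
    (B : Matrix ι κ ℤ) {w : κ → R} (hw : ∀ i, w i ∈ S) (l : ι) : (B.map (↑) *ᵥ w) l ∈ S :=
  S.sum_mem fun i _ => by simpa [zsmul_eq_mul] using S.zsmul_mem (hw i) (B l i)

theorem mulVecQ_eq_mulVec {ι κ : Type} [Fintype κ] (A : Matrix ι κ ℚ) (x : κ → ℚ) :
    mulVecQ A x = A *ᵥ x := by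
  ext i
  simp [mulVecQ, finsum_eq_sum_of_fintype, mulVec, dotProduct]

theorem mulVecQ_eq_zero_iff {ι κ : Type} [Fintype κ] (A : Matrix ι κ ℚ) (x : κ → ℚ) :
    (∀ i, mulVecQ A x i = 0) ↔ A *ᵥ x = 0 := by
  rw [mulVecQ_eq_mulVec, funext_iff]
  rfl

theorem WIPRQ.exists_of_finite {ι κ : Type} {A : ι → κ → ℚ} {S : Set ℚ} (h : WIPRQ A S)
    {γ : Type*} [Finite γ] (φ : ℚ → γ) :
    ∃ x, (∀ j, x j ∈ S) ∧ (∀ i, mulVecQ A x i ∈ S \ {0}) ∧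
      ∀ i i', φ (mulVecQ A x i) = φ (mulVecQ A x i') := by
  obtain ⟨k, ⟨e⟩⟩ := Finite.exists_equiv_fin γ
  obtain ⟨x, hxS, hAx, hmono⟩ := h k (e ∘ φ)
  exact ⟨x, hxS, hAx, fun i i' => e.injective (hmono i i')⟩

theorem WIPRQ.finrank_range_pos {ι κ : Type} [Fintype ι] [Fintype κ] [Nonempty ι]
    {A : Matrix ι κ ℚ} {S : Set ℚ} (h : WIPRQ A S) :
    0 < finrank ℚ (LinearMap.range A.mulVecLin) := by
  obtain ⟨x, -, hx, -⟩ := h 1 0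
  refine Nat.pos_of_ne_zero fun h0 => (hx (Classical.arbitrary _)).2 ?_
  have hxW : A *ᵥ x ∈ LinearMap.range A.mulVecLin := ⟨x, rfl⟩
  rw [Submodule.finrank_eq_zero.1 h0, Submodule.mem_bot] at hxW
  rw [mulVecQ_eq_mulVec, hxW, Pi.zero_apply, Set.mem_singleton_iff]

theorem KPRQ.submatrix {ρ ρ' κ κ' : Type} [Fintype κ] [Fintype κ'] {M : Matrix ρ κ ℚ}
    {T : Set ℚ} (h : KPRQ M T) (e₁ : ρ' → ρ) (e₂ : κ' ≃ κ) : KPRQ (M.submatrix e₁ e₂) T := by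
  intro k φ
  obtain ⟨x, hxT, hMx, hmono⟩ := h k φ
  refine ⟨x ∘ e₂, fun j => hxT _, fun r => ?_, fun j j' => hmono _ _⟩
  rw [mulVecQ_eq_mulVec, submatrix_mulVec_equiv, Function.comp_assoc, e₂.self_comp_symm,
    Function.comp_id, ← mulVecQ_eq_mulVec]
  exact hMx _

/-- The kernel of `kernelSystem C N` consists of the `((x, x'), z)` with `C z = 0` and
`z = N (x' - x)`. -/
def kernelSystem {ρ ι : Type*} [DecidableEq ι] (C : Matrix ρ ι ℚ) (N : ℕ) :
    Matrix (ρ ⊕ ι) ((ι ⊕ ι) ⊕ ι) ℚ :=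
  fromBlocks 0 C (fromCols ((N : ℚ) • 1) (-((N : ℚ) • 1))) 1

theorem kernelSystem_mulVec_eq_zero_iff {ρ ι : Type*} [Fintype ι] [DecidableEq ι]
    (C : Matrix ρ ι ℚ) (N : ℕ) (s : (ι ⊕ ι) ⊕ ι → ℚ) :
    kernelSystem C N *ᵥ s = 0 ↔ C *ᵥ (s ∘ Sum.inr) = 0 ∧
      ∀ i, s (.inr i) = N * (s (.inl (.inr i)) - s (.inl (.inl i))) := by
  simp only [kernelSystem, fromBlocks_mulVec, fromCols_mulVec, zero_mulVec, zero_add, neg_mulVec,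
    smul_mulVec, one_mulVec, funext_iff, Sum.forall, Sum.elim_inl, Sum.elim_inr]
  refine and_congr Iff.rfl (forall_congr' fun i => ?_)
  simp only [Pi.add_apply, Pi.neg_apply, Pi.smul_apply, Function.comp_apply, Pi.zero_apply,
    smul_eq_mul]
  constructor <;> intro h <;> linarith

section kernelSystem

variable {ρ ι κ : Type} [Fintype ι] [Fintype κ] [DecidableEq ι] [Nonempty ι] {S : AddSubgroup ℚ}
  {A : Matrix ι κ ℚ} {C : Matrix ρ ι ℚ} {N : ℕ}

theorem exists_mulVec_eq_of_kernelSystem_mulVec_eq_zero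
    (hC : ∀ z, C *ᵥ z = 0 → z ∈ LinearMap.range A.mulVecLin) (hN : 0 < N) {B : Matrix κ ι ℤ}
    (hB : ∀ z ∈ LinearMap.range A.mulVecLin, A *ᵥ (B.map (↑) *ᵥ z) = (N : ℚ) • z)
    {s : (ι ⊕ ι) ⊕ ι → ℚ} (hs : ∀ p, s p ∈ (S : Set ℚ) \ {0}) (hker : kernelSystem C N *ᵥ s = 0) :
    ∃ y, (∀ l, y l ∈ S) ∧ y ≠ 0 ∧ A *ᵥ y = s ∘ Sum.inr := by
  obtain ⟨hCz, hz⟩ := (kernelSystem_mulVec_eq_zero_iff C N s).1 hker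
  let w : ι → ℚ := fun i => s (.inl (.inr i)) - s (.inl (.inl i))
  have hzw : s ∘ Sum.inr = (N : ℚ) • w := funext hz
  have hAy : A *ᵥ (B.map (↑) *ᵥ w) = s ∘ Sum.inr :=
    smul_right_injective _ (by positivity : (N : ℚ) ≠ 0) <| by
      show (N : ℚ) • _ = (N : ℚ) • _
      rw [← mulVec_smul, ← mulVec_smul, ← hzw, hB _ (hC _ hCz)]
  refine ⟨_, S.intCast_mulVec_mem B fun i => S.sub_mem (hs _).1 (hs _).1, fun h0 => ?_, hAy⟩
  obtain ⟨i⟩ := ‹Nonempty ι›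
  have hi := congrFun hAy i
  rw [h0, mulVec_zero] at hi
  exact (hs (.inr i)).2 hi.symm

theorem kprq_kernelSystem (hA : WIPRQ A S) (hC : ∀ x, C *ᵥ (A *ᵥ x) = 0) (hN : 0 < N) :
    KPRQ (kernelSystem C N) S := by
  intro k φ
  obtain ⟨R, hR⟩ := exists_bound_mono_progressionTriple hN k
  obtain ⟨x, -, hxS, hxφ⟩ := hA.exists_of_finite fun q (n : Fin R) => φ (n * q)
  simp only [mulVecQ_eq_mulVec] at hxS hxφ
  set X := A *ᵥ x
  obtain ⟨i₀⟩ := ‹Nonempty ι›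
  obtain ⟨F, ⟨α, δ, hα, hδ, rfl⟩, hFR, c, hc⟩ := hR fun n => φ (n * X i₀)
  have hcol : ∀ n ∈ ({α, α + δ, N * δ} : Finset ℕ), ∀ i, φ (n * X i) = c := fun n hn i =>
    (congrFun (hxφ i i₀) ⟨n, mem_range.1 (hFR hn)⟩).trans (hc n hn)
  have hmem : ∀ n : ℕ, 0 < n → ∀ i, (n : ℚ) * X i ∈ (S : Set ℚ) \ {0} := fun n hn i =>
    ⟨by simpa using S.nsmul_mem (hxS i).1 n, mul_ne_zero (by positivity) (hxS i).2⟩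
  let s : (ι ⊕ ι) ⊕ ι → ℚ :=
    Sum.elim (Sum.elim ((α : ℚ) • X) (((α + δ : ℕ) : ℚ) • X)) (((N * δ : ℕ) : ℚ) • X)
  have hs : ∀ p, ∃ n ∈ ({α, α + δ, N * δ} : Finset ℕ), ∃ i, s p = n * X i := by
    rintro ((i | i) | i) <;> exact ⟨_, by simp, i, rfl⟩
  refine ⟨s, fun p => ?_, ?_, fun p p' => ?_⟩
  · obtain ⟨n, hn, i, hsp⟩ := hs p
    exact hsp ▸ hmem n (pos_of_mem_progressionTriples hN ⟨α, δ, hα, hδ, rfl⟩ hn) i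
  · rw [mulVecQ_eq_zero_iff, kernelSystem_mulVec_eq_zero_iff]
    refine ⟨?_, fun i => ?_⟩
    · change C *ᵥ (((N * δ : ℕ) : ℚ) • X) = 0
      rw [mulVec_smul, hC, smul_zero]
    · simp only [s, Sum.elim_inl, Sum.elim_inr, Pi.smul_apply, smul_eq_mul]
      push_cast
      ring
  · obtain ⟨n, hn, i, hsp⟩ := hs p
    obtain ⟨n', hn', i', hsp'⟩ := hs p'
    rw [hsp, hsp', hcol n hn i, hcol n' hn' i']

end kernelSystem

theorem stmt12_general (S : AddSubgroup ℚ)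
    (u v : ℕ) (A : Fin u → Fin v → ℚ)
    (hwipr : WIPRQ A (S : Set ℚ))
    (hdep : ¬ LinearIndependent ℚ A) :
    ∃ j : ℕ, j < u ∧ ∃ D : Fin (j + u) → Fin (3 * u) → ℚ,
      KPRQ D (S : Set ℚ) ∧
      ∀ s : Fin (3 * u) → ℚ,
        (∀ p, s p ∈ (S : Set ℚ) \ {0}) → (∀ r, mulVecQ D s r = 0) →
        ∃ y : Fin v → ℚ, (∀ i, y i ∈ (S : Set ℚ)) ∧ y ≠ 0 ∧
          ∀ i : Fin u, ∃ p, mulVecQ A y i = s p := by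
  have : Nonempty (Fin u) := Fin.pos_iff_nonempty.1 <| Nat.pos_of_ne_zero <| by
    rintro rfl
    exact hdep linearIndependent_empty_type
  let M := Matrix.of A
  have hM : ∀ x, mulVecQ A x = M *ᵥ x := mulVecQ_eq_mulVec M
  let W := LinearMap.range M.mulVecLin
  obtain ⟨m, hm, C, hC⟩ := W.exists_matrix_mulVec_eq_zero_iff
  have hW : 0 < finrank ℚ W := WIPRQ.finrank_range_pos (A := M) hwipr
  obtain ⟨N, hN, B, hB⟩ := M.exists_int_mulVec_rightInverse_on_range
  let e : (Fin u ⊕ Fin u) ⊕ Fin u ≃ Fin (3 * u) :=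
    ((finSumFinEquiv.sumCongr (.refl _)).trans finSumFinEquiv).trans (finCongr (by omega))
  refine ⟨m, by simp only [Fintype.card_fin] at hm; omega,
    (kernelSystem C N).submatrix finSumFinEquiv.symm e.symm,
    (kprq_kernelSystem hwipr (fun x => (hC _).2 ⟨x, rfl⟩) hN).submatrix _ _, fun s hs hker => ?_⟩
  rw [mulVecQ_eq_zero_iff, submatrix_mulVec_equiv, Equiv.symm_symm] at hker
  have hker' : kernelSystem C N *ᵥ (s ∘ e) = 0 := by
    ext r
    simpa using congrFun hker (finSumFinEquiv r)
  obtain ⟨y, hyS, hy0, hAy⟩ := exists_mulVec_eq_of_kernelSystem_mulVec_eq_zero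
    (fun z hz => (hC z).1 hz) hN hB (fun p => hs (e p)) hker'
  exact ⟨y, hyS, hy0, fun i => ⟨e (.inr i), by rw [hM, hAy]; rfl⟩⟩

/-- let `S` be a nontrivial subgroup of ℚ, `u, v ∈ ℕ`, and `A` a
`u × v` rational matrix weakly image partition regular over `S` whose rows are
linearly dependent. Then there are `j < u` and a `(j+u) × 3u` rational matrix
`D`, kernel partition regular over `S`, such that whenever `s ∈ (S \ {0})^{3u}`
and `D s = 0`, there is `y ∈ S^v \ {0}` with every entry of `A y` an entry
of `s`. -/
theorem stmt12 (S : AddSubgroup ℚ) (hS : ∃ s ∈ S, s ≠ (0 : ℚ))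
    (u v : ℕ) (A : Fin u → Fin v → ℚ)
    (hwipr : WIPRQ A (S : Set ℚ))
    (hdep : ¬ LinearIndependent ℚ A) :
    ∃ j : ℕ, j < u ∧ ∃ D : Fin (j + u) → Fin (3 * u) → ℚ,
      KPRQ D (S : Set ℚ) ∧
      ∀ s : Fin (3 * u) → ℚ,
        (∀ p, s p ∈ (S : Set ℚ) \ {0}) → (∀ r, mulVecQ D s r = 0) →
        ∃ y : Fin v → ℚ, (∀ i, y i ∈ (S : Set ℚ)) ∧ y ≠ 0 ∧
          ∀ i : Fin u, ∃ p, mulVecQ A y i = s p :=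
  stmt12_general S u v A hwipr hdep
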